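/- (Corollary 1) Let X be a variable with parent set U (X ∉ U) and let f be a functional CPT for X over {X} ∪ U. Let G be a factor over a variable set Y ⊇ {X} ∪ U of the form G = f · G₀ for some factor G₀, and let H be a factor over a variable set W ⊇ {X} ∪ U of the form H = f · H₀ for some factor H₀. Then summing out X from the product G · H factorizes: ∑_X (G · H) = (∑_X G) · (∑_X H) as factors over (Y ∪ W) \ {X}. -/

import Mathlib

/-- An instantiation of the variables in `S`, where variable `i` has value set `V i`. -/
abbrev Inst {ι : Type*} (V : ι → Type*) (S : Finset ι) : Type _ :=
  ∀ i : S, V i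

/-- Restrict an instantiation of `T` to a subset `S ⊆ T`. -/
def Inst.restrict {ι : Type*} {V : ι → Type*} {S T : Finset ι} (h : S ⊆ T)
    (z : Inst V T) : Inst V S :=
  fun i => z ⟨i, h i.2⟩

/-- Transport an instantiation along an equality of variable sets. -/
def Inst.cast {ι : Type*} {V : ι → Type*} {S T : Finset ι} (h : S = T)
    (z : Inst V S) : Inst V T :=
  fun i => z ⟨i, h.symm ▸ i.2⟩

/-- Extend an instantiation `u` of `U` with a value `x` for the variable `X`,
yielding an instantiation of `insert X U`. -/
def Inst.consX {ι : Type*} [DecidableEq ι] {V : ι → Type*} {U : Finset ι} (X : ι)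
    (x : V X) (u : Inst V U) : Inst V (insert X U) :=
  fun i => if h : (i : ι) = X then _root_.cast (congrArg V h).symm x
           else u ⟨i, (Finset.mem_insert.mp i.2).resolve_left h⟩

/-- Extend an instantiation `w` of `W \ {X}` with a value `x` for `X ∈ W`,
yielding an instantiation of `W`. -/
def Inst.extendAt {ι : Type*} [DecidableEq ι] {V : ι → Type*} {W : Finset ι} (X : ι)
    (_hX : X ∈ W) (x : V X) (w : Inst V (W \ {X})) : Inst V W :=
  fun i => if h : (i : ι) = X then _root_.cast (congrArg V h).symm x
           else w ⟨i, Finset.mem_sdiff.mpr ⟨i.2, Finset.notMem_singleton.mpr h⟩⟩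

/-- The product of a factor over `S` and a factor over `T` is a factor over `S ∪ T`. -/
def Factor.mul {ι : Type*} [DecidableEq ι] {V : ι → Type*} {S T : Finset ι}
    (f : Inst V S → ℝ) (g : Inst V T → ℝ) : Inst V (S ∪ T) → ℝ :=
  fun z => f (fun i => z ⟨i, Finset.mem_union_left _ i.2⟩) *
           g (fun i => z ⟨i, Finset.mem_union_right _ i.2⟩)

/-- Summing out the variables `Y ⊆ S` from a factor over `S` yields a factor over `S \ Y`. -/
noncomputable def Factor.sumOut {ι : Type*} [DecidableEq ι] {V : ι → Type*}
    [∀ i, Fintype (V i)] {S : Finset ι} (Y : Finset ι) (_hY : Y ⊆ S)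
    (f : Inst V S → ℝ) : Inst V (S \ Y) → ℝ :=
  fun z => ∑ y : Inst V Y, f fun i =>
    if h : (i : ι) ∈ Y then y ⟨i, h⟩ else z ⟨i, Finset.mem_sdiff.mpr ⟨i.2, h⟩⟩

/-! Since `X ∉ U`, summing out `X` leaves the parent instantiation `u` fixed, and as `f` is
functional, `x ↦ f (x, u)` is the indicator of a single value `x₀` of `X`. Both sides of the
identity therefore collapse to the term at `x₀`. -/

open Finset

namespace Fintype

variable {α R : Type*} [Fintype α] [Semiring R] [CharZero R]

theorem exists_eq_pi_single_of_sum_eq_one [DecidableEq α] {φ : α → R}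
    (h01 : ∀ x, φ x = 0 ∨ φ x = 1) (hsum : ∑ x, φ x = 1) : ∃ x₀, φ = Pi.single x₀ 1 := by
  classical
  have hcard : #{x | φ x = 1} = 1 := by
    have hboole : ∀ x, φ x = if φ x = 1 then 1 else 0 := fun x => by
      rcases h01 x with h | h <;> simp [h]
    rw [Fintype.sum_congr _ _ hboole, sum_boole] at hsum
    exact_mod_cast hsum
  obtain ⟨x₀, hx₀⟩ := card_eq_one.mp hcard
  have hone : ∀ x, φ x = 1 ↔ x = x₀ := fun x => by simpa using Finset.ext_iff.mp hx₀ x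
  refine ⟨x₀, funext fun x => ?_⟩
  rw [Pi.single_apply]
  split_ifs with hx
  · exact (hone x).mpr hx
  · exact (h01 x).resolve_right (mt (hone x).mp hx)

theorem sum_mul_mul_eq_sum_mul_sum_of_sum_eq_one {φ : α → R}
    (h01 : ∀ x, φ x = 0 ∨ φ x = 1) (hsum : ∑ x, φ x = 1) (a b : α → R) :
    ∑ x, φ x * a x * (φ x * b x) = (∑ x, φ x * a x) * ∑ x, φ x * b x := by
  classical
  obtain ⟨x₀, rfl⟩ := exists_eq_pi_single_of_sum_eq_one h01 hsum
  simp [Pi.single_apply]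

end Fintype

theorem Factor.sumOut_singleton {ι : Type*} [DecidableEq ι] {V : ι → Type*}
    [∀ i, Fintype (V i)] {S : Finset ι} (X : ι) (hX : {X} ⊆ S) (g : Inst V S → ℝ)
    (z : Inst V (S \ {X})) :
    Factor.sumOut {X} hX g z = ∑ x : V X, g (Inst.extendAt X (hX (mem_singleton_self X)) x z) := by
  refine (Fintype.sum_equiv (Equiv.piUnique fun i : ({X} : Finset ι) => V i).symm _ _
    fun x => congrArg g (funext fun i => ?_)).symm
  by_cases h : (i : ι) = X
  · subst h
    simp only [Inst.extendAt, dif_pos, mem_singleton_self]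
    rfl
  · simp [Inst.extendAt, h]

/-- **Corollary 1 of the paper.** Let `f` be a functional CPT for variable `X`
with parents `U`. If the products `G` (over `Y ⊇ {X} ∪ U`) and `H` (over `W ⊇ {X} ∪ U`)
both contain `f` as a multiplicand, then `∑_X (G · H) = (∑_X G) · (∑_X H)` as factors over
`(Y ∪ W) \ {X}`. -/
theorem sumOut_mul_factorizes_of_functional {ι : Type*} [DecidableEq ι] (V : ι → Type*)
    [∀ i, Fintype (V i)]
    (X : ι) (U : Finset ι) (hXU : X ∉ U)
    (f : Inst V (insert X U) → ℝ)
    (hcpt : ∀ u : Inst V U, ∑ x : V X, f (Inst.consX X x u) = 1)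
    (hfun : ∀ (x : V X) (u : Inst V U),
      f (Inst.consX X x u) = 0 ∨ f (Inst.consX X x u) = 1)
    (Y W : Finset ι) (hY : insert X U ⊆ Y) (hW : insert X U ⊆ W)
    (G : Inst V Y → ℝ) (H : Inst V W → ℝ)
    (G₀ : Inst V Y → ℝ) (hG : ∀ z : Inst V Y, G z = f (Inst.restrict hY z) * G₀ z)
    (H₀ : Inst V W → ℝ) (hH : ∀ z : Inst V W, H z = f (Inst.restrict hW z) * H₀ z) :
    ∀ z : Inst V ((Y ∪ W) \ {X}),
      Factor.sumOut {X}
          (Finset.singleton_subset_iff.mpr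
            (Finset.mem_union_left W (hY (Finset.mem_insert_self X U))))
          (Factor.mul G H) z
        = Factor.mul
            (Factor.sumOut {X}
              (Finset.singleton_subset_iff.mpr (hY (Finset.mem_insert_self X U))) G)
            (Factor.sumOut {X}
              (Finset.singleton_subset_iff.mpr (hW (Finset.mem_insert_self X U))) H)
            (Inst.cast
              (by
                ext a
                simp only [Finset.mem_union, Finset.mem_sdiff, Finset.mem_singleton]
                tauto) z) := by
  intro z
  have hU : U ⊆ (Y ∪ W) \ {X} := fun i hi => mem_sdiff.mpr
    ⟨mem_union_left W (hY (mem_insert_of_mem hi)),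
      notMem_singleton.mpr (ne_of_mem_of_not_mem hi hXU)⟩
  simp only [Factor.mul, Factor.sumOut_singleton, hG, hH]
  -- Every parent instantiation occurring here is definitionally `Inst.restrict hU z`.
  exact Fintype.sum_mul_mul_eq_sum_mul_sum_of_sum_eq_one (hfun · (Inst.restrict hU z)) (hcpt _) _ _
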